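/- Let X and Y be real Banach spaces and let H : X → Y be a continuously Fréchet differentiable map. Suppose there are a point x₀ ∈ X and positive constants δ and C such that: (i) for every x in the closed ball B̄_δ(x₀) = {x ∈ X : ‖x − x₀‖ ≤ δ}, the Fréchet derivative DH(x) is a continuous linear isomorphism from X onto Y with ‖(DH(x))⁻¹‖ ≤ C; and (ii) for all x₁, x₂ ∈ B̄_δ(x₀), ‖DH(x₁) − DH(x₂)‖ ≤ 1/(2C) in the operator norm. If ‖H(x₀)‖ ≤ δ/(2C), then there exists x ∈ B̄_δ(x₀) with H(x) = 0. -/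

import Mathlib

/-! The derivative `L = DH(x₀)` is inverted by `e.symm` with norm at most `C`, and on the ball
`B̄_δ(x₀)` the map `H` differs from `L` by a `1/(2C)`-Lipschitz remainder (mean value theorem).
Newton's chord iteration `x ↦ x - L⁻¹ H(x)` is then a `1/2`-contraction, so `H` maps the ball
onto a ball around `H(x₀)` of radius `(1/C - 1/(2C)) δ = δ/(2C)`, which contains `0`. -/

open Metric

theorem Convex.approximatesLinearOn_of_norm_fderiv_sub_le
    {𝕜 E F : Type*} [NontriviallyNormedField 𝕜] [IsRCLikeNormedField 𝕜]
    [NormedAddCommGroup E] [NormedSpace ℝ E] [NormedSpace 𝕜 E]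
    [NormedAddCommGroup F] [NormedSpace 𝕜 F]
    {f : E → F} {φ : E →L[𝕜] F} {s : Set E} {c : NNReal} (hs : Convex ℝ s)
    (hf : ∀ x ∈ s, DifferentiableAt 𝕜 f x) (bound : ∀ x ∈ s, ‖fderiv 𝕜 f x - φ‖ ≤ c) :
    ApproximatesLinearOn f φ s c :=
  fun _ hx _ hy => hs.norm_image_sub_le_of_norm_fderiv_le' hf bound hy hx

theorem ApproximatesLinearOn.exists_mem_closedBall_eq
    {𝕜 E F : Type*} [NontriviallyNormedField 𝕜]
    [NormedAddCommGroup E] [NormedSpace 𝕜 E] [CompleteSpace E]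
    [NormedAddCommGroup F] [NormedSpace 𝕜 F]
    {f : E → F} {e : E ≃L[𝕜] F} {b : E} {ε : ℝ} {c C : NNReal}
    (hf : ApproximatesLinearOn f (e : E →L[𝕜] F) (closedBall b ε) c)
    (he : ‖(e.symm : F →L[𝕜] E)‖₊ ≤ C) (hε : 0 ≤ ε) {y : F}
    (hy : dist y (f b) ≤ ((C : ℝ)⁻¹ - c) * ε) :
    ∃ x ∈ closedBall b ε, f x = y :=
  let eInv : (e : E →L[𝕜] F).NonlinearRightInverse :=
    { toFun := e.symm
      nnnorm := C
      bound' := fun y => ((e.symm : F →L[𝕜] E).le_opNorm y).trans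
        (mul_le_mul_of_nonneg_right (NNReal.coe_le_coe.mpr he) (norm_nonneg y))
      right_inv' := e.apply_symm_apply }
  hf.surjOn_closedBall_of_nonlinearRightInverse eInv hε subset_rfl hy

theorem implicit_function_zero_general
    {X Y : Type*} [NormedAddCommGroup X] [NormedSpace ℝ X] [CompleteSpace X]
    [NormedAddCommGroup Y] [NormedSpace ℝ Y]
    (H : X → Y) (hH : ContDiff ℝ 1 H)
    (x₀ : X) (δ C : ℝ) (hδ : 0 < δ) (hC : 0 < C)
    (hiso : ∀ x ∈ Metric.closedBall x₀ δ, ∃ e : X ≃L[ℝ] Y,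
      (e : X →L[ℝ] Y) = fderiv ℝ H x ∧ ‖(e.symm : Y →L[ℝ] X)‖ ≤ C)
    (hlip : ∀ x₁ ∈ Metric.closedBall x₀ δ, ∀ x₂ ∈ Metric.closedBall x₀ δ,
      ‖fderiv ℝ H x₁ - fderiv ℝ H x₂‖ ≤ 1 / (2 * C))
    (h0 : ‖H x₀‖ ≤ δ / (2 * C)) :
    ∃ x ∈ Metric.closedBall x₀ δ, H x = 0 := by
  have hx₀ : x₀ ∈ closedBall x₀ δ := mem_closedBall_self hδ.le
  obtain ⟨e, he, heC⟩ := hiso x₀ hx₀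
  have happrox : ApproximatesLinearOn H (e : X →L[ℝ] Y) (closedBall x₀ δ)
      ⟨1 / (2 * C), by positivity⟩ :=
    (convex_closedBall x₀ δ).approximatesLinearOn_of_norm_fderiv_sub_le
      (fun x _ => (hH.differentiable one_ne_zero).differentiableAt)
      (fun x hx => he ▸ hlip x hx x₀ hx₀)
  refine happrox.exists_mem_closedBall_eq (C := ⟨C, hC.le⟩) heC hδ.le ?_
  calc dist 0 (H x₀) = ‖H x₀‖ := dist_zero_left _
    _ ≤ δ / (2 * C) := h0
    _ = (C⁻¹ - 1 / (2 * C)) * δ := by field_simp; ring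

/-- **Lemma 3.5 (implicit function theorem).**
Let `X` and `Y` be real Banach spaces and `H : X → Y` a `C¹` map.  Suppose there are
`x₀ ∈ X` and positive constants `δ`, `C` such that for every `x` in the closed ball
`B̄_δ(x₀)` the Fréchet derivative `DH(x)` is a continuous linear isomorphism of `X`
onto `Y` whose inverse has operator norm at most `C`, and such that
`‖DH(x₁) − DH(x₂)‖ ≤ 1/(2C)` for all `x₁, x₂ ∈ B̄_δ(x₀)`.  If `‖H(x₀)‖ ≤ δ/(2C)`,
then there is `x ∈ B̄_δ(x₀)` with `H(x) = 0`. -/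
theorem implicit_function_zero
    {X Y : Type*} [NormedAddCommGroup X] [NormedSpace ℝ X] [CompleteSpace X]
    [NormedAddCommGroup Y] [NormedSpace ℝ Y] [CompleteSpace Y]
    (H : X → Y) (hH : ContDiff ℝ 1 H)
    (x₀ : X) (δ C : ℝ) (hδ : 0 < δ) (hC : 0 < C)
    (hiso : ∀ x ∈ Metric.closedBall x₀ δ, ∃ e : X ≃L[ℝ] Y,
      (e : X →L[ℝ] Y) = fderiv ℝ H x ∧ ‖(e.symm : Y →L[ℝ] X)‖ ≤ C)
    (hlip : ∀ x₁ ∈ Metric.closedBall x₀ δ, ∀ x₂ ∈ Metric.closedBall x₀ δ,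
      ‖fderiv ℝ H x₁ - fderiv ℝ H x₂‖ ≤ 1 / (2 * C))
    (h0 : ‖H x₀‖ ≤ δ / (2 * C)) :
    ∃ x ∈ Metric.closedBall x₀ δ, H x = 0 :=
  implicit_function_zero_general H hH x₀ δ C hδ hC hiso hlip h0
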